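/- arXiv:2202.00627 — 2 statements merged into one kernel-verified Lean document; each statement's English description precedes it below -/
import Mathlib

section
/- For n ≥ 2 with n ≡ 1 (mod 3) and d ≥ 1, the coefficients p_d(n) satisfy 3·(4·3^{(n-4)/3})^{d-1}/(2·((n-4)/3)!) < p_d(n) ≤ (4·3^{(n-4)/3})^{d-1}·p(n). -/
/-!
Expanding each factor `(1 - q^j)^(-j^(d-1))` as a power series in `q^j`, the coefficient
`p_d(n)` becomes a sum over the partitions `μ` of `n` of `∏ⱼ multichoose (j^(d-1)) (mⱼ μ)`,
where `mⱼ μ` is the multiplicity of the part `j`. Since `multichoose a k ≤ a^k`, every summand is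
at most `(∏ μ)^(d-1)`, and the largest product of a partition of `n = 3K + 4` is `4 * 3^K`.
For the lower bound keep only the partitions `4 + 3 + ⋯ + 3` and `2 + 2 + 3 + ⋯ + 3`, and use
`a^k ≤ multichoose a k * k!`.
-/

open PowerSeries Finset
open scoped Nat

/-- `p : ℕ → ℚ` is the coefficient sequence of `∏_{n≥1} (1-q^n)^{-n^(d-1)}`. -/
def IsPdSeries (d : ℕ) (p : ℕ → ℚ) : Prop :=
  ∀ N k : ℕ, k ≤ N →
    (PowerSeries.coeff k) ((PowerSeries.mk p) *
      ∏ n ∈ Finset.Icc 1 N, (1 - (PowerSeries.X : PowerSeries ℚ) ^ n) ^ (n ^ (d - 1))) =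
    if k = 0 then 1 else 0

namespace Nat

theorem ascFactorial_eq_factorial_mul_multichoose (a k : ℕ) :
    a.ascFactorial k = k ! * a.multichoose k := by
  rw [multichoose_eq, ascFactorial_eq_factorial_mul_choose']

theorem multichoose_le_pow (a k : ℕ) : a.multichoose k ≤ a ^ k :=
  le_of_mul_le_mul_left (a.ascFactorial_eq_factorial_mul_multichoose k ▸
    a.ascFactorial_le_factorial_mul_pow k) k.factorial_pos

theorem pow_le_multichoose_mul_factorial (a k : ℕ) : a ^ k ≤ a.multichoose k * k ! := by
  rw [mul_comm, ← ascFactorial_eq_factorial_mul_multichoose]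
  exact pow_succ_le_ascFactorial a k

theorem two_mul_multichoose_two (b : ℕ) : 2 * b.multichoose 2 = b * (b + 1) := by
  have h := b.ascFactorial_eq_factorial_mul_multichoose 2
  rw [ascFactorial_succ, ascFactorial_succ, ascFactorial_zero, factorial_two] at h
  linarith

end Nat

/-- The largest product of the parts of a partition of `n`. -/
def maxProd : ℕ → ℕ
  | 0 => 1
  | 1 => 1
  | 2 => 2
  | 3 => 3
  | 4 => 4
  | n + 5 => 3 * maxProd (n + 2)

theorem maxProd_add_three {n : ℕ} (hn : 2 ≤ n) : maxProd (n + 3) = 3 * maxProd n := by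
  obtain ⟨m, rfl⟩ : ∃ m, n = m + 2 := ⟨n - 2, by omega⟩
  rfl

theorem maxProd_three_mul_add_four (K : ℕ) : maxProd (3 * K + 4) = 4 * 3 ^ K := by
  induction K with
  | zero => rfl
  | succ K ih =>
    rw [show 3 * (K + 1) + 4 = 3 * K + 4 + 3 by ring, maxProd_add_three (by omega), ih]
    ring

theorem mul_maxProd_le (j m : ℕ) : j * maxProd m ≤ maxProd (j + m) := by
  induction m using Nat.strong_induction_on generalizing j with
  | _ m ihm =>
  induction j using Nat.strong_induction_on with
  | _ j ihj =>
  by_cases hm : 5 ≤ m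
  · obtain ⟨m, rfl⟩ : ∃ k, m = k + 3 := ⟨m - 3, by omega⟩
    rw [maxProd_add_three (by omega), ← add_assoc, maxProd_add_three (by omega), mul_left_comm]
    exact Nat.mul_le_mul_left 3 (ihm m (by omega) j)
  by_cases hj : 5 ≤ j
  · obtain ⟨j, rfl⟩ : ∃ k, j = k + 3 := ⟨j - 3, by omega⟩
    rw [add_right_comm, maxProd_add_three (by omega)]
    calc (j + 3) * maxProd m ≤ 3 * (j * maxProd m) := by nlinarith
      _ ≤ 3 * maxProd (j + m) := Nat.mul_le_mul_left 3 (ihj j (by omega))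
  interval_cases j <;> interval_cases m <;> decide

theorem Multiset.prod_le_maxProd_sum (s : Multiset ℕ) : s.prod ≤ maxProd s.sum := by
  induction s using Multiset.induction_on with
  | empty => rfl
  | cons a s ih =>
    rw [Multiset.prod_cons, Multiset.sum_cons]
    exact (Nat.mul_le_mul_left a ih).trans (mul_maxProd_le a s.sum)

namespace Nat.Partition

theorem exists_toFinsuppAntidiag_eq {n : ℕ} {l : ℕ →₀ ℕ} (hl : l ∈ (Icc 1 n).finsuppAntidiag n)
    (hdvd : ∀ j ∈ Icc 1 n, j ∣ l j) : ∃ μ : n.Partition, μ.toFinsuppAntidiag = l := by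
  rw [mem_finsuppAntidiag] at hl
  set s : Multiset ℕ := ∑ j ∈ Icc 1 n, Multiset.replicate (l j / j) j
  have hs : s.sum = n := by
    rw [← hl.1, ← Multiset.coe_sumAddMonoidHom, map_sum]
    refine sum_congr rfl fun j hj => ?_
    rw [Multiset.coe_sumAddMonoidHom, Multiset.sum_replicate, smul_eq_mul,
      Nat.div_mul_cancel (hdvd j hj)]
  have hl0 : ∀ i ∉ Icc 1 n, l i = 0 := fun i hi =>
    Finsupp.notMem_support_iff.mp fun h => hi (hl.2 h)
  refine ⟨ofSums n s hs, Finsupp.ext fun i => ?_⟩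
  change (ofSums n s hs).parts.count i * i = l i
  rcases eq_or_ne i 0 with rfl | hi0
  · rw [count_ofSums_zero, hl0 0 (by simp)]
  rw [count_ofSums_of_ne_zero hs hi0, Multiset.count_sum']
  simp only [Multiset.count_replicate, sum_ite_eq']
  split_ifs with hi
  · exact Nat.div_mul_cancel (hdvd i hi)
  · rw [hl0 i hi, zero_mul]

end Nat.Partition

namespace PowerSeries

variable {R : Type*}

theorem coeff_mk_one_pow [CommRing R] (a k : ℕ) :
    coeff k ((mk 1 : R⟦X⟧) ^ a) = a.multichoose k := by
  cases a with
  | zero => cases k <;> simp [coeff_one]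
  | succ e =>
    rw [mk_one_pow_eq_mk_choose_add R e, coeff_mk, Nat.multichoose_eq, Nat.add_right_comm,
      Nat.add_sub_cancel, Nat.choose_symm_add]

theorem mk_multichoose_mul_one_sub_X_pow [CommRing R] {j : ℕ} (hj : j ≠ 0) (a : ℕ) :
    (mk fun m => if j ∣ m then (a.multichoose (m / j) : R) else 0) * (1 - X ^ j) ^ a = 1 := by
  have hexpand : (mk fun m => if j ∣ m then (a.multichoose (m / j) : R) else 0) =
      expand j hj ((mk 1) ^ a) := by
    ext m
    rw [coeff_mk, coeff_expand, coeff_mk_one_pow]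
  rw [hexpand, ← expand_X j hj, ← map_one (expand j hj), ← map_sub, ← map_pow, ← map_mul,
    ← mul_pow, mk_one_mul_one_sub_eq_one, one_pow, map_one]

theorem coeff_eq_of_mul_eq_one [CommSemiring R] {f g h : R⟦X⟧} (hgh : g * h = 1) {n : ℕ}
    (hf : ∀ k ≤ n, coeff k (f * g) = coeff k 1) : coeff n f = coeff n h := by
  have htrunc : trunc (n + 1) (f * g) = trunc (n + 1) 1 := by
    ext k
    simp only [coeff_trunc]
    split_ifs with hk
    · exact hf k (by omega)
    · rfl
  calc coeff n f = coeff n (f * g * h) := by rw [mul_assoc, hgh, mul_one]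
    _ = coeff n (1 * h) := by
      rw [coeff_mul_eq_coeff_trunc_mul_trunc _ _ n.lt_succ_self, htrunc,
        ← coeff_mul_eq_coeff_trunc_mul_trunc _ _ n.lt_succ_self]
    _ = coeff n h := by rw [one_mul]

/-- A finite form of `Nat.Partition.hasProd_genFun`. -/
theorem coeff_prod_eq_sum_partition [CommSemiring R] (f : ℕ → R⟦X⟧) (c : ℕ → ℕ → R) (n : ℕ)
    (hf : ∀ j ∈ Icc 1 n, ∀ m, coeff m (f j) = if j ∣ m then c j (m / j) else 0) :
    coeff n (∏ j ∈ Icc 1 n, f j) = ∑ μ : n.Partition, ∏ j ∈ Icc 1 n, c j (μ.parts.count j) := by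
  rw [coeff_prod]
  symm
  refine sum_of_injOn Nat.Partition.toFinsuppAntidiag
    (Nat.Partition.toFinsuppAntidiag_injective n).injOn
    (fun μ _ => Nat.Partition.toFinsuppAntidiag_mem_finsuppAntidiag μ)
    (fun l hl hl_range => ?_) (fun μ _ => ?_)
  · by_contra hne
    have hdvd : ∀ j ∈ Icc 1 n, j ∣ l j := fun j hj => by
      by_contra h
      exact hne (prod_eq_zero hj (by rw [hf j hj, if_neg h]))
    obtain ⟨μ, hμ⟩ := Nat.Partition.exists_toFinsuppAntidiag_eq hl hdvd
    exact hl_range ⟨μ, mem_coe.mpr (mem_univ μ), hμ⟩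
  · refine prod_congr rfl fun j hj => ?_
    change _ = coeff (μ.parts.count j * j) (f j)
    rw [hf j hj, if_pos (dvd_mul_left j _), Nat.mul_div_cancel _ (mem_Icc.mp hj).1]

end PowerSeries

/-- The number of ways to give each part `j` of `μ` one of `j ^ (d - 1)` colours, equal parts
being unordered. -/
def Nat.Partition.pdWeight (d : ℕ) {n : ℕ} (μ : n.Partition) : ℕ :=
  ∏ j ∈ Icc 1 n, (j ^ (d - 1)).multichoose (μ.parts.count j)

theorem IsPdSeries.eq_sum_pdWeight {d : ℕ} {p : ℕ → ℚ} (hp : IsPdSeries d p) (n : ℕ) :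
    p n = ∑ μ : n.Partition, (μ.pdWeight d : ℚ) := by
  set f : ℕ → ℚ⟦X⟧ := fun j =>
    mk fun m => if j ∣ m then ((j ^ (d - 1)).multichoose (m / j) : ℚ) else 0
  have hinv : (∏ j ∈ Icc 1 n, (1 - X ^ j) ^ (j ^ (d - 1))) * ∏ j ∈ Icc 1 n, f j = 1 := by
    rw [← prod_mul_distrib]
    refine prod_eq_one fun j hj => ?_
    rw [mul_comm]
    exact mk_multichoose_mul_one_sub_X_pow (Nat.one_le_iff_ne_zero.mp (mem_Icc.mp hj).1) _
  rw [← coeff_mk n p, coeff_eq_of_mul_eq_one hinv fun k hk => by rw [hp n k hk, coeff_one],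
    coeff_prod_eq_sum_partition f (fun j k => ((j ^ (d - 1)).multichoose k : ℚ)) n
      fun j _ m => by simp only [f, coeff_mk]]
  simp only [Nat.Partition.pdWeight, Nat.cast_prod]

namespace Nat.Partition

theorem pdWeight_le_maxProd_pow (d : ℕ) {n : ℕ} (μ : n.Partition) :
    μ.pdWeight d ≤ maxProd n ^ (d - 1) := by
  have hparts : μ.parts.toFinset ⊆ Icc 1 n := fun j hj => by
    rw [Multiset.mem_toFinset] at hj
    exact mem_Icc.mpr ⟨μ.parts_pos hj, μ.le_of_mem_parts hj⟩
  calc μ.pdWeight d ≤ ∏ j ∈ Icc 1 n, (j ^ (d - 1)) ^ μ.parts.count j :=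
        prod_le_prod' fun j _ => Nat.multichoose_le_pow _ _
    _ = μ.parts.prod ^ (d - 1) := by
        rw [prod_multiset_count_of_subset _ _ hparts, ← prod_pow]
        exact prod_congr rfl fun j _ => by rw [← pow_mul, ← pow_mul, mul_comm]
    _ ≤ maxProd n ^ (d - 1) := by
        gcongr
        simpa only [μ.parts_sum] using μ.parts.prod_le_maxProd_sum

theorem pdWeight_ofSums (d : ℕ) {n : ℕ} {s : Multiset ℕ} (hs : s.sum = n) {t : Finset ℕ}
    (hst : ∀ j ∈ s, j ∈ t) (ht : t ⊆ Icc 1 n) :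
    (ofSums n s hs).pdWeight d = ∏ j ∈ t, (j ^ (d - 1)).multichoose (s.count j) := by
  have hcount : ∀ j ∈ Icc 1 n, (ofSums n s hs).parts.count j = s.count j := fun j hj =>
    count_ofSums_of_ne_zero hs (Nat.one_le_iff_ne_zero.mp (mem_Icc.mp hj).1)
  rw [pdWeight, prod_congr rfl fun j hj => by rw [hcount j hj]]
  refine (prod_subset ht fun j _ hjt => ?_).symm
  rw [Multiset.count_eq_zero.mpr fun hj => hjt (hst j hj), Nat.multichoose_zero_right]

theorem exists_ne_three_mul_pow_lt_pdWeight_add (d K : ℕ) :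
    ∃ μ₁ μ₂ : (3 * K + 4).Partition, μ₁ ≠ μ₂ ∧
      3 * (4 * 3 ^ K) ^ (d - 1) < 2 * K ! * (μ₁.pdWeight d + μ₂.pdWeight d) := by
  have hs₁ : (4 ::ₘ Multiset.replicate K 3).sum = 3 * K + 4 := by
    simp only [Multiset.sum_cons, Multiset.sum_replicate, smul_eq_mul]; ring
  have hs₂ : (2 ::ₘ 2 ::ₘ Multiset.replicate K 3).sum = 3 * K + 4 := by
    simp only [Multiset.sum_cons, Multiset.sum_replicate, smul_eq_mul]; ring
  refine ⟨ofSums _ _ hs₁, ofSums _ _ hs₂, fun h => ?_, ?_⟩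
  · have := congrArg (fun μ : (3 * K + 4).Partition => μ.parts.count 4) h
    simp at this
  rw [pdWeight_ofSums d hs₁ (t := {4, 3})
      (by intro j hj; simp only [Multiset.mem_cons, Multiset.mem_replicate, mem_insert,
        mem_singleton] at hj ⊢; omega)
      (by intro j; simp only [mem_insert, mem_singleton, mem_Icc]; omega),
    pdWeight_ofSums d hs₂ (t := {2, 3})
      (by intro j hj; simp only [Multiset.mem_cons, Multiset.mem_replicate, mem_insert,
        mem_singleton] at hj ⊢; omega)
      (by intro j; simp only [mem_insert, mem_singleton, mem_Icc]; omega),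
    prod_pair (by norm_num), prod_pair (by norm_num)]
  simp only [Multiset.count_cons_self, Multiset.count_replicate, reduceEqDiff, ↓reduceIte,
    zero_add, Nat.multichoose_one_right, ne_eq, not_false_eq_true, Multiset.count_cons_of_ne,
    Nat.succ_ne_self, Nat.reduceAdd]
  have hb : 1 ≤ 2 ^ (d - 1) := Nat.one_le_two_pow
  have hpos : 0 < (3 ^ (d - 1)) ^ K := by positivity
  have hlow := Nat.pow_le_multichoose_mul_factorial (3 ^ (d - 1)) K
  have hchoose := Nat.two_mul_multichoose_two (2 ^ (d - 1))
  rw [mul_pow, pow_right_comm, show 4 = 2 * 2 by rfl, mul_pow]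
  -- with `b = 2 ^ (d - 1)`: `2 * (b * b + multichoose b 2) = 3 * b * b + b > 3 * b * b`
  nlinarith [Nat.mul_le_mul_left (2 ^ (d - 1) * 2 ^ (d - 1)) hlow,
    Nat.mul_le_mul_left (2 * (2 ^ (d - 1)).multichoose 2) hlow,
    Nat.mul_le_mul_left (2 ^ (d - 1)) hpos]

end Nat.Partition

theorem pd_bounds_mod_one_general (d : ℕ) (p : ℕ → ℚ) (hp : IsPdSeries d p)
    (n : ℕ) (hn : 2 ≤ n) (h3 : n % 3 = 1) :
    3 * ((4 * 3 ^ ((n - 4) / 3) : ℕ) : ℚ) ^ (d - 1) / (2 * (Nat.factorial ((n - 4) / 3) : ℚ)) < p n ∧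
    p n ≤ ((4 * 3 ^ ((n - 4) / 3) : ℕ) : ℚ) ^ (d - 1) * (Fintype.card (Nat.Partition n) : ℚ) := by
  obtain ⟨K, rfl⟩ : ∃ K, n = 3 * K + 4 := ⟨(n - 4) / 3, by omega⟩
  rw [show (3 * K + 4 - 4) / 3 = K by omega, hp.eq_sum_pdWeight]
  constructor
  · obtain ⟨μ₁, μ₂, hne, hlt⟩ := Nat.Partition.exists_ne_three_mul_pow_lt_pdWeight_add d K
    have hpair : μ₁.pdWeight d + μ₂.pdWeight d ≤ ∑ μ : (3 * K + 4).Partition, μ.pdWeight d := by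
      rw [← sum_pair hne]
      exact sum_le_sum_of_subset (subset_univ _)
    rw [div_lt_iff₀ (by positivity)]
    exact_mod_cast (hlt.trans_le (Nat.mul_le_mul_left _ hpair)).trans_eq (mul_comm _ _)
  · have hsum := sum_le_card_nsmul univ (fun μ : (3 * K + 4).Partition => μ.pdWeight d) _
      fun μ _ => μ.pdWeight_le_maxProd_pow d
    rw [maxProd_three_mul_add_four, card_univ, smul_eq_mul, mul_comm (Fintype.card _)] at hsum
    exact_mod_cast hsum

/-- Bounds for `p_d(n)` when `n ≡ 1 (mod 3)`. -/
theorem pd_bounds_mod_one (d : ℕ) (hd : 1 ≤ d) (p : ℕ → ℚ) (hp : IsPdSeries d p)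
    (n : ℕ) (hn : 2 ≤ n) (h3 : n % 3 = 1) :
    3 * ((4 * 3 ^ ((n - 4) / 3) : ℕ) : ℚ) ^ (d - 1) / (2 * (Nat.factorial ((n - 4) / 3) : ℚ)) < p n ∧
    p n ≤ ((4 * 3 ^ ((n - 4) / 3) : ℕ) : ℚ) ^ (d - 1) * (Fintype.card (Nat.Partition n) : ℚ) :=
  pd_bounds_mod_one_general d p hp n hn h3
end

section
/- For n ≥ 2 with n ≡ 2 (mod 3) and d ≥ 1, the coefficients p_d(n) satisfy (2·3^{(n-2)/3})^{d-1}/((n-2)/3)! < p_d(n) ≤ (2·3^{(n-2)/3})^{d-1}·p(n). -/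
/-!
Expanding every factor `(1 - q^i)^(-i^(d-1))` of the product gives
`p_d(n) = ∑_{λ ⊢ n} ∏_i multichoose(i^(d-1), m_i(λ))`, where `m_i(λ)` is the multiplicity of
the part `i` in `λ`. Since `multichoose(a, c) ≤ a^c`, the term of `λ` is at most
`(∏ λ)^(d-1)`, and the parts of a partition of `n = 3m + 2` have product at most `2 · 3^m`;
summing over the `p(n)` partitions gives the upper bound. For the lower bound keep only the
partitions `1^n`, contributing `1`, and `2 · 3^m`, contributing
`2^(d-1) · multichoose(3^(d-1), m) ≥ (2 · 3^m)^(d-1) / m!`.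
-/

open PowerSeries Finset

open scoped PowerSeries.WithPiTopology

namespace Nat

theorem multichoose_le_pow_s6 : ∀ a c : ℕ, multichoose a c ≤ a ^ c
  | _, 0 => by simp
  | 0, c + 1 => by simp
  | a + 1, c + 1 => calc
    multichoose (a + 1) (c + 1) = multichoose a (c + 1) + multichoose (a + 1) c :=
      multichoose_succ_succ a c
    _ ≤ a ^ (c + 1) + (a + 1) ^ c := add_le_add (multichoose_le_pow_s6 a _) (multichoose_le_pow_s6 _ c)
    _ ≤ a * (a + 1) ^ c + (a + 1) ^ c := by
      rw [pow_succ']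
      exact add_le_add_left (Nat.mul_le_mul_left a (Nat.pow_le_pow_left a.le_succ c)) _
    _ = (a + 1) ^ (c + 1) := by ring

theorem pow_le_factorial_mul_multichoose (a c : ℕ) : a ^ c ≤ c ! * multichoose a c := by
  rw [multichoose_eq, ← ascFactorial_eq_factorial_mul_choose']
  exact pow_succ_le_ascFactorial a c

end Nat

/-- The largest product of the parts of a partition of `n`: take as many parts `3` as possible. -/
def maxPartProd : ℕ → ℕ
  | 0 => 1
  | 1 => 1
  | 2 => 2
  | 3 => 3
  | 4 => 4
  | n + 5 => 3 * maxPartProd (n + 2)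

theorem maxPartProd_add_three {n : ℕ} (hn : 2 ≤ n) :
    maxPartProd (n + 3) = 3 * maxPartProd n := by
  obtain ⟨k, rfl⟩ := Nat.exists_eq_add_of_le' hn
  rfl

theorem le_maxPartProd (n : ℕ) : n ≤ maxPartProd n := by
  induction n using Nat.strong_induction_on with
  | _ n ih =>
    match n with
    | 0 | 1 | 2 | 3 | 4 => decide
    | k + 5 =>
      have := ih (k + 2) (by omega)
      rw [show k + 5 = k + 2 + 3 from rfl, maxPartProd_add_three (by omega)]
      omega

theorem maxPartProd_mul_le (a b : ℕ) : maxPartProd a * maxPartProd b ≤ maxPartProd (a + b) := by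
  induction h : a + b using Nat.strong_induction_on generalizing a b with
  | _ s ih =>
    subst h
    by_cases ha : 5 ≤ a
    · obtain ⟨c, rfl⟩ := Nat.exists_eq_add_of_le' ha
      rw [show c + 5 = c + 2 + 3 by omega, maxPartProd_add_three (by omega),
        show c + 2 + 3 + b = c + 2 + b + 3 by omega, maxPartProd_add_three (by omega), mul_assoc]
      exact Nat.mul_le_mul_left 3 (ih _ (by omega) _ _ rfl)
    by_cases hb : 5 ≤ b
    · obtain ⟨c, rfl⟩ := Nat.exists_eq_add_of_le' hb
      rw [show c + 5 = c + 2 + 3 by omega, maxPartProd_add_three (by omega),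
        show a + (c + 2 + 3) = a + (c + 2) + 3 by omega, maxPartProd_add_three (by omega),
        mul_left_comm]
      exact Nat.mul_le_mul_left 3 (ih _ (by omega) _ _ rfl)
    interval_cases a <;> interval_cases b <;> decide

theorem Multiset.prod_le_maxPartProd_sum (s : Multiset ℕ) : s.prod ≤ maxPartProd s.sum := by
  induction s using Multiset.induction with
  | empty => decide
  | cons a s ih =>
    rw [Multiset.prod_cons, Multiset.sum_cons]
    exact (Nat.mul_le_mul (le_maxPartProd a) ih).trans (maxPartProd_mul_le a s.sum)

theorem maxPartProd_three_mul_add_two (m : ℕ) : maxPartProd (3 * m + 2) = 2 * 3 ^ m := by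
  induction m with
  | zero => rfl
  | succ m ih =>
    rw [show 3 * (m + 1) + 2 = 3 * m + 2 + 3 by ring, maxPartProd_add_three (by omega), ih]
    ring

namespace PowerSeries

variable {R : Type*} [CommRing R]

theorem coeff_invOneSubPow (a c : ℕ) :
    coeff c (invOneSubPow R a).val = Nat.multichoose a c := by
  cases a with
  | zero => cases c <;> simp [invOneSubPow_zero, coeff_one]
  | succ a =>
    rw [invOneSubPow_val_succ_eq_mk_add_choose, coeff_mk, Nat.multichoose_eq,
      Nat.add_right_comm, Nat.add_sub_cancel, Nat.choose_symm_add]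

theorem coeff_mul_eq_of_coeff_eq_ite {F : R⟦X⟧} {k : ℕ}
    (hF : ∀ i ≤ k, coeff i F = if i = 0 then 1 else 0) (G : R⟦X⟧) :
    coeff k (F * G) = coeff k G := by
  rw [coeff_mul, Finset.sum_eq_single (0, k)]
  · simp [hF 0 k.zero_le]
  · rintro ⟨i, j⟩ hij hne
    have hi : i ≠ 0 := by rintro rfl; simp_all
    rw [hF i (HasAntidiagonal.antidiagonal.fst_le hij), if_neg hi, zero_mul]
  · simp

variable [TopologicalSpace R]

theorem hasSum_expand_sub_one {i : ℕ} (hi : i ≠ 0) {ψ : R⟦X⟧} (hψ : constantCoeff ψ = 1) :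
    HasSum (fun j ↦ coeff (j + 1) ψ • (X : R⟦X⟧) ^ (i * (j + 1))) (expand i hi ψ - 1) := by
  rw [WithPiTopology.hasSum_iff_hasSum_coeff]
  intro k
  simp only [coeff_smul, coeff_X_pow, smul_eq_mul, mul_ite, mul_one, mul_zero, map_sub,
    coeff_expand, coeff_one]
  by_cases hk : ∃ j, k = i * (j + 1)
  · obtain ⟨j₀, rfl⟩ := hk
    convert hasSum_single j₀ fun j hj ↦
      if_neg fun h : i * (j₀ + 1) = i * (j + 1) ↦ hj (by simpa [hi] using h.symm) using 1
    simp [hi]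
  · push Not at hk
    have hk₀ : (if i ∣ k then coeff (k / i) ψ else 0) = if k = 0 then 1 else 0 := by
      rcases eq_or_ne k 0 with rfl | hk₀
      · simpa using hψ
      · refine if_neg ?_ |>.trans (if_neg hk₀).symm
        rintro ⟨_ | j, rfl⟩
        exacts [hk₀ (mul_zero i), hk j rfl]
    simp [hk, hk₀]

variable [T2Space R]

theorem eq_of_hasProd_of_coeff_mul_prod_inv {T U : ℕ → R⟦X⟧} {G A : R⟦X⟧} (hG : HasProd T G)
    (hTU : ∀ i, T i * U i = 1)
    (hA : ∀ N k, k ≤ N → coeff k (A * ∏ i ∈ range N, U i) = if k = 0 then 1 else 0) :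
    A = G := by
  ext k
  have hlim : Filter.Tendsto (fun N ↦ coeff k (∏ i ∈ range N, T i)) Filter.atTop
      (nhds (coeff k G)) :=
    ((WithPiTopology.continuous_coeff R k).tendsto G).comp hG.tendsto_prod_nat
  have hstable : ∀ N ≥ k, coeff k A = coeff k (∏ i ∈ range N, T i) := fun N hN ↦ calc
    coeff k A = coeff k ((A * ∏ i ∈ range N, U i) * ∏ i ∈ range N, T i) := by
      rw [mul_assoc, ← prod_mul_distrib]
      simp_rw [mul_comm (U _), hTU, prod_const_one, mul_one]
    _ = coeff k (∏ i ∈ range N, T i) :=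
      coeff_mul_eq_of_coeff_eq_ite (fun i hi ↦ hA N i (hi.trans hN)) _
  exact tendsto_nhds_unique (tendsto_const_nhds.congr' (Filter.eventually_atTop.2 ⟨k, hstable⟩))
    hlim

end PowerSeries

namespace Nat.Partition

theorem hasProd_expand_genFun {R : Type*} [CommRing R] [TopologicalSpace R] [T2Space R]
    (ψ : ℕ → R⟦X⟧) (hψ : ∀ i, constantCoeff (ψ i) = 1) :
    HasProd (fun i ↦ expand (i + 1) i.succ_ne_zero (ψ (i + 1)))
      (genFun fun i c ↦ coeff c (ψ i)) := by
  have h := hasProd_genFun (fun i c ↦ coeff c (ψ i))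
  simp_rw [(hasSum_expand_sub_one (Nat.succ_ne_zero _) (hψ _)).tsum_eq, add_sub_cancel] at h
  exact h

/-- The term of `π` in `p_{e+1}(n)`: a part `i` of multiplicity `c` contributes
`multichoose (i ^ e) c`, the coefficient of `q ^ (i * c)` in `(1 - q ^ i) ^ (-i ^ e)`. -/
def weight (e : ℕ) {n : ℕ} (π : n.Partition) : ℕ :=
  ∏ i ∈ π.parts.toFinset, Nat.multichoose (i ^ e) (π.parts.count i)

theorem coeff_genFun_invOneSubPow (e n : ℕ) :
    coeff n (genFun fun i c ↦ coeff c (invOneSubPow ℚ (i ^ e)).val) =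
      ∑ π : n.Partition, (weight e π : ℚ) := by
  simp [coeff_genFun, Finsupp.prod, Multiset.toFinsupp_support, Multiset.toFinsupp_apply,
    coeff_invOneSubPow, weight]

theorem weight_eq_prod_of_subset (e : ℕ) {n : ℕ} (π : n.Partition) {S : Finset ℕ}
    (hS : π.parts.toFinset ⊆ S) :
    weight e π = ∏ i ∈ S, Nat.multichoose (i ^ e) (π.parts.count i) :=
  prod_subset hS fun i _ hi ↦ by simp_all

theorem weight_le_prod_parts_pow (e : ℕ) {n : ℕ} (π : n.Partition) :
    weight e π ≤ π.parts.prod ^ e := calc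
  weight e π ≤ ∏ i ∈ π.parts.toFinset, (i ^ e) ^ π.parts.count i :=
    prod_le_prod' fun i _ ↦ Nat.multichoose_le_pow_s6 _ _
  _ = π.parts.prod ^ e := by
    simp_rw [← pow_mul, mul_comm e, pow_mul, prod_pow, ← prod_multiset_count]

theorem sum_weight_le (e n : ℕ) :
    ∑ π : n.Partition, weight e π ≤ maxPartProd n ^ e * Fintype.card n.Partition := calc
  ∑ π : n.Partition, weight e π ≤ ∑ _π : n.Partition, maxPartProd n ^ e :=
    sum_le_sum fun π _ ↦ (weight_le_prod_parts_pow e π).trans <| Nat.pow_le_pow_left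
      ((Multiset.prod_le_maxPartProd_sum π.parts).trans_eq (congrArg maxPartProd π.parts_sum)) e
  _ = maxPartProd n ^ e * Fintype.card n.Partition := by
    rw [sum_const, smul_eq_mul, Finset.card_univ, mul_comm]

theorem one_add_pow_mul_multichoose_le_sum_weight (e m : ℕ) :
    1 + 2 ^ e * Nat.multichoose (3 ^ e) m ≤ ∑ π : (3 * m + 2).Partition, weight e π := by
  let ones : (3 * m + 2).Partition :=
    ⟨Multiset.replicate (3 * m + 2) 1, fun hi ↦ by rw [Multiset.eq_of_mem_replicate hi]; simp,
      by rw [Multiset.sum_replicate, smul_eq_mul, mul_one]⟩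
  let twoThrees : (3 * m + 2).Partition :=
    ⟨2 ::ₘ Multiset.replicate m 3, by simp +contextual [Multiset.mem_replicate],
      by rw [Multiset.sum_cons, Multiset.sum_replicate, smul_eq_mul]; ring⟩
  have hne : ones ≠ twoThrees := fun h ↦ by
    have h2 : 2 ∈ ones.parts := by rw [h]; exact Multiset.mem_cons_self 2 (Multiset.replicate m 3)
    exact absurd (Multiset.eq_of_mem_replicate h2) (by decide)
  have hones : weight e ones = 1 := by
    rw [weight_eq_prod_of_subset e ones (S := {1}) fun i hi ↦ by
      simp [Multiset.eq_of_mem_replicate (Multiset.mem_toFinset.1 hi)]]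
    simp [ones]
  have htwoThrees : weight e twoThrees = 2 ^ e * Nat.multichoose (3 ^ e) m := by
    rw [weight_eq_prod_of_subset e twoThrees (S := {2, 3}) fun i hi ↦ by
      replace hi : i ∈ 2 ::ₘ Multiset.replicate m 3 := Multiset.mem_toFinset.1 hi
      rcases Multiset.mem_cons.1 hi with rfl | hi
      exacts [by simp, by simp [Multiset.eq_of_mem_replicate hi]]]
    simp [twoThrees, Multiset.count_replicate]
  calc 1 + 2 ^ e * Nat.multichoose (3 ^ e) m = ∑ π ∈ {ones, twoThrees}, weight e π := by
        rw [sum_pair hne, hones, htwoThrees]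
    _ ≤ ∑ π : (3 * m + 2).Partition, weight e π := sum_le_sum_of_subset (subset_univ _)

theorem pow_lt_sum_weight_mul_factorial (e m : ℕ) :
    (2 * 3 ^ m) ^ e < (∑ π : (3 * m + 2).Partition, weight e π) * m ! := calc
  (2 * 3 ^ m) ^ e = 2 ^ e * (3 ^ e) ^ m := by ring
  _ ≤ 2 ^ e * (m ! * Nat.multichoose (3 ^ e) m) :=
    Nat.mul_le_mul_left _ (Nat.pow_le_factorial_mul_multichoose _ _)
  _ < (1 + 2 ^ e * Nat.multichoose (3 ^ e) m) * m ! := by nlinarith [m.factorial_pos]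
  _ ≤ (∑ π : (3 * m + 2).Partition, weight e π) * m ! :=
    Nat.mul_le_mul_right _ (one_add_pow_mul_multichoose_le_sum_weight e m)

end Nat.Partition

theorem IsPdSeries.eq_sum_weight {d : ℕ} {p : ℕ → ℚ} (hp : IsPdSeries d p) (n : ℕ) :
    p n = ∑ π : n.Partition, (Nat.Partition.weight (d - 1) π : ℚ) := by
  have hinv (i : ℕ) : expand (i + 1) i.succ_ne_zero (invOneSubPow ℚ ((i + 1) ^ (d - 1))).val *
      (1 - X ^ (i + 1)) ^ ((i + 1) ^ (d - 1)) = 1 := by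
    rw [← expand_X (i + 1) i.succ_ne_zero, ← map_one (expand (i + 1) i.succ_ne_zero), ← map_sub,
      ← map_pow, ← map_mul, ← invOneSubPow_inv_eq_one_sub_pow, Units.val_inv, map_one]
  have hgen : mk p = Nat.Partition.genFun fun i c ↦ coeff c (invOneSubPow ℚ (i ^ (d - 1))).val :=
    eq_of_hasProd_of_coeff_mul_prod_inv
      (Nat.Partition.hasProd_expand_genFun _ fun i ↦ by
        rw [← coeff_zero_eq_constantCoeff_apply, coeff_invOneSubPow, Nat.multichoose_zero_right,
          Nat.cast_one])
      hinv fun N k hk ↦ by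
        rw [range_eq_Ico, prod_Ico_add' (fun i ↦ (1 - X ^ i) ^ i ^ (d - 1)) 0 N 1, zero_add,
          Ico_add_one_right_eq_Icc]
        exact hp N k hk
  rw [← coeff_mk n p, hgen, Nat.Partition.coeff_genFun_invOneSubPow]

theorem pd_bounds_mod_two_general (d : ℕ) (p : ℕ → ℚ) (hp : IsPdSeries d p)
    (n : ℕ) (h3 : n % 3 = 2) :
    ((2 * 3 ^ ((n - 2) / 3) : ℕ) : ℚ) ^ (d - 1) / (Nat.factorial ((n - 2) / 3) : ℚ) < p n ∧
    p n ≤ ((2 * 3 ^ ((n - 2) / 3) : ℕ) : ℚ) ^ (d - 1) * (Fintype.card (Nat.Partition n) : ℚ) := by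
  obtain ⟨m, rfl⟩ : ∃ m, n = 3 * m + 2 := ⟨n / 3, by omega⟩
  rw [show (3 * m + 2 - 2) / 3 = m by omega, hp.eq_sum_weight]
  constructor
  · rw [div_lt_iff₀ (by positivity)]
    exact_mod_cast Nat.Partition.pow_lt_sum_weight_mul_factorial (d - 1) m
  · rw [← maxPartProd_three_mul_add_two]
    exact_mod_cast Nat.Partition.sum_weight_le (d - 1) (3 * m + 2)

/-- Bounds for `p_d(n)` when `n ≡ 2 (mod 3)`. -/
theorem pd_bounds_mod_two (d : ℕ) (hd : 1 ≤ d) (p : ℕ → ℚ) (hp : IsPdSeries d p)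
    (n : ℕ) (hn : 2 ≤ n) (h3 : n % 3 = 2) :
    ((2 * 3 ^ ((n - 2) / 3) : ℕ) : ℚ) ^ (d - 1) / (Nat.factorial ((n - 2) / 3) : ℚ) < p n ∧
    p n ≤ ((2 * 3 ^ ((n - 2) / 3) : ℕ) : ℚ) ^ (d - 1) * (Fintype.card (Nat.Partition n) : ℚ) :=
  pd_bounds_mod_two_general d p hp n h3
end
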